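/- For all odd natural numbers n, 25 times the sum over i from 0 to n of (-1)^i·C(n,i)·F_i^4 equals -5^{(n+1)/2}·(F_{2n} + 4·F_n). -/

import Mathlib

/-!
Binet's formula turns `25 F_i⁴ = (φⁱ - ψⁱ)⁴` into a combination of the geometric sequences
`(φ⁴)ⁱ, (ψ⁴)ⁱ, (φ²)ⁱ, (ψ²)ⁱ, 1`, using `φψ = -1`. Against `(-1)ⁱ C(n,i)` each of them sums by the
binomial theorem, and the bases that appear, `1 - φ⁴ = -√5 φ²`, `1 - ψ⁴ = √5 ψ²`, `1 + φ² = √5 φ`,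
`1 + ψ² = -√5 ψ`, are `√5` times powers of `φ` and `ψ`. For odd `n` the resulting powers recombine,
again by Binet, into `-√5ⁿ⁺¹ (F_{2n} + 4 F_n)`.
-/

open Finset goldenRatio

lemma sum_range_choose_mul_pow {R : Type*} [CommSemiring R] (n : ℕ) (x : R) :
    ∑ i ∈ range (n + 1), (n.choose i : R) * x ^ i = (x + 1) ^ n := by
  rw [add_pow]
  exact sum_congr rfl fun i _ => by ring

namespace Real

lemma sqrt_five_mul_fib (n : ℕ) : √5 * Nat.fib n = φ ^ n - ψ ^ n := by
  rw [coe_fib_eq]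
  field_simp

lemma neg_goldenRatio_pow_four_add_one : -φ ^ 4 + 1 = -(√5 * φ ^ 2) := by
  rw [← goldenRatio_sub_goldenConj]
  linear_combination (-φ ^ 2 - 1) * goldenRatio_sq - φ * goldenRatio_mul_goldenConj

lemma neg_goldenConj_pow_four_add_one : -ψ ^ 4 + 1 = √5 * ψ ^ 2 := by
  rw [← goldenRatio_sub_goldenConj]
  linear_combination (-ψ ^ 2 - 1) * goldenConj_sq - ψ * goldenRatio_mul_goldenConj

lemma goldenRatio_sq_add_one : φ ^ 2 + 1 = √5 * φ := by
  rw [← goldenRatio_sub_goldenConj]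
  linear_combination goldenRatio_mul_goldenConj

lemma goldenConj_sq_add_one : ψ ^ 2 + 1 = -(√5 * ψ) := by
  rw [← goldenRatio_sub_goldenConj]
  linear_combination goldenRatio_mul_goldenConj

lemma twentyFive_mul_neg_one_pow_mul_fib_pow_four (i : ℕ) :
    25 * ((-1) ^ i * (Nat.fib i : ℝ) ^ 4) =
      (-φ ^ 4) ^ i + (-ψ ^ 4) ^ i - 4 * ((φ ^ 2) ^ i + (ψ ^ 2) ^ i) + 6 * (-1) ^ i := by
  set e : ℝ := (-1) ^ i
  have hpq : φ ^ i * ψ ^ i = e := by rw [← mul_pow, goldenRatio_mul_goldenConj]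
  have he : e * e = 1 := by rw [← mul_pow]; norm_num
  have hfib : 25 * (Nat.fib i : ℝ) ^ 4 = (φ ^ i - ψ ^ i) ^ 4 := by
    rw [← sqrt_five_mul_fib, mul_pow, show √5 ^ 4 = (√5 ^ 2) ^ 2 by ring,
      sq_sqrt (by norm_num : (0 : ℝ) ≤ 5)]
    norm_num
  have hφ : (-φ ^ 4) ^ i = e * (φ ^ i) ^ 4 := by rw [neg_pow, pow_right_comm]
  have hψ : (-ψ ^ 4) ^ i = e * (ψ ^ i) ^ 4 := by rw [neg_pow, pow_right_comm]
  rw [mul_left_comm, hfib, hφ, hψ, pow_right_comm φ 2 i, pow_right_comm ψ 2 i]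
  -- `ring` unfolds `φ` and `ψ`, after which it cannot match `(φ ^ 4) ^ i` with `(φ ^ i) ^ 4`.
  generalize φ ^ i = p at *
  generalize ψ ^ i = q at *
  linear_combination (6 * e * (p * q + e) - 4 * e * (p ^ 2 + q ^ 2)) * hpq
    + (6 * e - 4 * (p ^ 2 + q ^ 2)) * he

lemma twentyFive_mul_sum_neg_one_pow_mul_choose_mul_fib_pow_four (n : ℕ) :
    25 * ∑ i ∈ range (n + 1), (-1 : ℝ) ^ i * n.choose i * (Nat.fib i : ℝ) ^ 4 =
      (-(√5 * φ ^ 2)) ^ n + (√5 * ψ ^ 2) ^ n - 4 * ((√5 * φ) ^ n + (-(√5 * ψ)) ^ n)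
        + 6 * 0 ^ n := by
  calc 25 * ∑ i ∈ range (n + 1), (-1 : ℝ) ^ i * n.choose i * (Nat.fib i : ℝ) ^ 4
      = ∑ i ∈ range (n + 1), (n.choose i : ℝ) * (-φ ^ 4) ^ i
          + ∑ i ∈ range (n + 1), (n.choose i : ℝ) * (-ψ ^ 4) ^ i
          - 4 * (∑ i ∈ range (n + 1), (n.choose i : ℝ) * (φ ^ 2) ^ i
            + ∑ i ∈ range (n + 1), (n.choose i : ℝ) * (ψ ^ 2) ^ i)
          + 6 * ∑ i ∈ range (n + 1), (n.choose i : ℝ) * (-1) ^ i := by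
        simp only [mul_sum, ← sum_add_distrib, ← sum_sub_distrib]
        exact sum_congr rfl fun i _ => by
          linear_combination (n.choose i : ℝ) * twentyFive_mul_neg_one_pow_mul_fib_pow_four i
    _ = _ := by
        simp only [sum_range_choose_mul_pow, neg_goldenRatio_pow_four_add_one,
          neg_goldenConj_pow_four_add_one, goldenRatio_sq_add_one, goldenConj_sq_add_one,
          neg_add_cancel]

end Real

theorem stmt_13 (n : ℕ) (hn : Odd n) :
    25 * ∑ i ∈ Finset.range (n + 1), (-1 : ℤ) ^ i * (n.choose i : ℤ) * (Nat.fib i : ℤ) ^ 4 =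
      -(5 : ℤ) ^ ((n + 1) / 2) * ((Nat.fib (2 * n) : ℤ) + 4 * (Nat.fib n : ℤ)) := by
  have hpow : (5 : ℝ) ^ ((n + 1) / 2) = √5 ^ (n + 1) := by
    obtain ⟨k, rfl⟩ := hn
    rw [show (2 * k + 1 + 1) / 2 = k + 1 by omega, show 2 * k + 1 + 1 = 2 * (k + 1) by ring,
      pow_mul, Real.sq_sqrt (by norm_num)]
  suffices h : 25 * ∑ i ∈ range (n + 1), (-1 : ℝ) ^ i * n.choose i * (Nat.fib i : ℝ) ^ 4 =
      -(5 : ℝ) ^ ((n + 1) / 2) * ((Nat.fib (2 * n) : ℝ) + 4 * (Nat.fib n : ℝ)) by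
    exact_mod_cast h
  rw [Real.twentyFive_mul_sum_neg_one_pow_mul_choose_mul_fib_pow_four, hn.neg_pow, hn.neg_pow,
    zero_pow hn.pos.ne', hpow, mul_pow, mul_pow, mul_pow, mul_pow]
  have h2n := Real.sqrt_five_mul_fib (2 * n)
  rw [pow_mul, pow_mul] at h2n
  generalize φ ^ 2 = a at *
  generalize ψ ^ 2 = b at *
  linear_combination √5 ^ n * h2n + 4 * √5 ^ n * Real.sqrt_five_mul_fib n
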